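/- arXiv:1701.06690 — 2 statements merged into one kernel-verified Lean document; each statement's English description precedes it below -/
import Mathlib

section
/- The ideal M·Q^{n−m} of R is minimally generated by C(n, n−m+1)·n elements; that is, μ_R(M·Q^{n−m}) = C(n, n−m+1)·n. (Since the graded canonical module of R is K_R = Q^{n−m}(−m), this computes μ_R(M·K_R).) -/
/-!
The Segre map `x_{ij} ↦ s_i t_j` sends `R` to `k[s, t]`. The ideal `M·Q^e` is spanned by the
products `x_{a j} x_{b₁ 1} ⋯ x_{b_e 1}`, which by the `2 × 2` minors depend only on `j` and on the
multiset `{a, b₁, …, b_e}`; their images are the distinct monomials `s_a s_{b₁} ⋯ s_{b_e} t_j t_1^e`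
of degree `2e + 2`, whereas `M·(M·Q^e)` lands in degree `≥ 2e + 4`. Hence these `C(m + e, e + 1)·n`
products are linearly independent modulo `M·(M·Q^e)`, and as `R = k + M` no generating set of
`M·Q^e` can be smaller.
-/

set_option synthInstance.maxHeartbeats 1000000

noncomputable section

open MvPolynomial

/-- The minimal number of generators of an ideal `I`, i.e. the least cardinality of a
finite generating set of `I`. -/
def idealMu {A : Type*} [CommRing A] (I : Ideal A) : ℕ :=
  sInf {c : ℕ | ∃ s : Finset A, s.card = c ∧ Ideal.span (s : Set A) = I}

variable (k : Type*) [Field k] (m n : ℕ)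

/-- The ideal `I₂(X)` of `2 × 2` minors of the generic `m × n` matrix
`X = (X_{ij})` in the polynomial ring `S = k[X_{ij}]`. -/
def detIdeal : Ideal (MvPolynomial (Fin m × Fin n) k) :=
  Ideal.span {f | ∃ (i₁ i₂ : Fin m) (j₁ j₂ : Fin n), i₁ < i₂ ∧ j₁ < j₂ ∧
    f = X (i₁, j₁) * X (i₂, j₂) - X (i₁, j₂) * X (i₂, j₁)}

/-- The determinantal ring `R = S/I₂(X)`. -/
abbrev DetRing := MvPolynomial (Fin m × Fin n) k ⧸ detIdeal k m n

/-- `x_{ij}`, the image of `X_{ij}` in `R`. -/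
def xbar (i : Fin m) (j : Fin n) : DetRing k m n :=
  Ideal.Quotient.mk _ (X (i, j))

/-- The graded maximal ideal `M = R₊`, generated by all the `x_{ij}`. -/
def maxIdeal : Ideal (DetRing k m n) :=
  Ideal.span (Set.range fun p : Fin m × Fin n => xbar k m n p.1 p.2)

/-- The ideal `Q = (x_{11}, x_{21}, …, x_{m1})` generated by the entries of the
first column of `X`. -/
def colIdeal : Ideal (DetRing k m n) :=
  Ideal.span {y | ∃ (i : Fin m) (j : Fin n), (j : ℕ) = 0 ∧ y = xbar k m n i j}

section MinimalGenerators

variable {k A ι : Type*} [Field k] [CommRing A] [Algebra k A] [Fintype ι] {M I : Ideal A}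

theorem card_le_card_of_span_eq (hM : ∀ r : A, ∃ c : k, r - algebraMap k A c ∈ M)
    {v : ι → A} (hvI : ∀ i, v i ∈ I) (hv : LinearIndependent k (Ideal.Quotient.mk (M * I) ∘ v))
    {s : Finset A} (hs : Ideal.span (s : Set A) = I) : Fintype.card ι ≤ s.card := by
  classical
  let q := Ideal.Quotient.mkₐ k (M * I)
  have hspan : ∀ x ∈ I, q x ∈ Submodule.span k (s.image q : Set (A ⧸ M * I)) := by
    intro x hx
    rw [← hs] at hx
    induction hx using Submodule.span_induction with
    | mem y hy => exact Submodule.subset_span (Finset.mem_coe.2 (Finset.mem_image_of_mem q hy))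
    | zero => simp
    | add y z _ _ hy hz => rw [map_add]; exact add_mem hy hz
    | smul a y hy hqy =>
      obtain ⟨c, hc⟩ := hM a
      have hq : q ((a - algebraMap k A c) * y) = 0 :=
        Ideal.Quotient.eq_zero_iff_mem.2 (Ideal.mul_mem_mul hc (hs ▸ hy))
      rw [smul_eq_mul, ← sub_add_cancel a (algebraMap k A c), add_mul, map_add, hq, zero_add,
        ← Algebra.smul_def, map_smul]
      exact Submodule.smul_mem _ c hqy
  calc Fintype.card ι ≤ Fintype.card (s.image q : Set (A ⧸ M * I)) :=
        linearIndependent_le_span_aux' _ hv _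
          (Set.range_subset_iff.2 fun i => hspan _ (hvI i))
    _ ≤ s.card := by simpa using Finset.card_image_le

theorem idealMu_eq_card (hM : ∀ r : A, ∃ c : k, r - algebraMap k A c ∈ M) {v : ι → A}
    (hspan : Ideal.span (Set.range v) = I)
    (hv : LinearIndependent k (Ideal.Quotient.mk (M * I) ∘ v)) :
    idealMu I = Fintype.card ι := by
  classical
  have hmem : Fintype.card ι ∈ {c | ∃ s : Finset A, s.card = c ∧ Ideal.span (s : Set A) = I} :=
    ⟨Finset.univ.image v, by rw [Finset.card_image_of_injective _ hv.injective.of_comp,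
      Finset.card_univ], by rwa [Finset.coe_image, Finset.coe_univ, Set.image_univ]⟩
  refine le_antisymm (Nat.sInf_le hmem) (le_csInf ⟨_, hmem⟩ ?_)
  rintro _ ⟨s, rfl, hs⟩
  exact card_le_card_of_span_eq hM (fun i => hspan ▸ Ideal.subset_span ⟨i, rfl⟩) hv hs

theorem linearIndependent_mk_of_eq_monomial {σ : Type*} (f : A →ₐ[k] MvPolynomial σ k)
    {K : Ideal A} {N : ℕ} (hK : K.map f ≤ idealOfVars σ k ^ N) {v : ι → A} {d : ι → σ →₀ ℕ}
    (hd : d.Injective) (hdeg : ∀ i, (d i).degree < N) (hfv : ∀ i, f (v i) = monomial (d i) 1) :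
    LinearIndependent k (Ideal.Quotient.mk K ∘ v) := by
  classical
  rw [Fintype.linearIndependent_iff]
  intro c hc i
  have hK' : ∑ j, c j • v j ∈ K := by
    rw [← Ideal.Quotient.eq_zero_iff_mem, ← Ideal.Quotient.mkₐ_eq_mk k, map_sum]
    simpa using hc
  have := (mem_pow_idealOfVars_iff' N _).1 (hK (Ideal.mem_map_of_mem f hK')) (d i) (hdeg i)
  simpa [hfv, coeff_sum, coeff_monomial, hd.eq_iff] using this

end MinimalGenerators

section DeterminantalRing

variable {k m n}

theorem xbar_mul_xbar_swap (a b : Fin m) (j j' : Fin n) :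
    xbar k m n a j * xbar k m n b j' = xbar k m n b j * xbar k m n a j' := by
  have minor : ∀ {a b : Fin m} {j j' : Fin n}, a < b → j < j' →
      xbar k m n a j * xbar k m n b j' = xbar k m n a j' * xbar k m n b j := by
    intro a b j j' hab hj
    simp only [xbar, ← map_mul]
    exact Ideal.Quotient.eq.2 (Ideal.subset_span ⟨a, b, j, j', hab, hj, rfl⟩)
  rcases lt_trichotomy a b with hab | rfl | hab <;> rcases lt_trichotomy j j' with hj | rfl | hj
  all_goals first
    | rfl
    | exact mul_comm _ _
    | grind [minor hab hj]

theorem exists_sub_algebraMap_mem_maxIdeal (r : DetRing k m n) :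
    ∃ c : k, r - algebraMap k _ c ∈ maxIdeal k m n := by
  obtain ⟨p, rfl⟩ := Ideal.Quotient.mk_surjective r
  refine ⟨coeff 0 p, ?_⟩
  have hp : p - C (coeff 0 p) ∈ idealOfVars (Fin m × Fin n) k := by
    refine pow_one (idealOfVars _ k) ▸ (mem_pow_idealOfVars_iff' 1 _).2 fun d hd => ?_
    obtain rfl : d = 0 := (Finsupp.degree_eq_zero_iff d).1 (Nat.lt_one_iff.1 hd)
    simp
  have hmax : maxIdeal k m n = (idealOfVars _ k).map (Ideal.Quotient.mk (detIdeal k m n)) := by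
    rw [Ideal.map_span, ← Set.range_comp]
    rfl
  rw [hmax, ← Ideal.Quotient.mk_algebraMap, algebraMap_eq, ← map_sub]
  exact Ideal.mem_map_of_mem _ hp

variable (k m n) in
def segre : DetRing k m n →ₐ[k] MvPolynomial (Fin m ⊕ Fin n) k :=
  let f : MvPolynomial (Fin m × Fin n) k →ₐ[k] MvPolynomial (Fin m ⊕ Fin n) k :=
    aeval fun p => X (Sum.inl p.1) * X (Sum.inr p.2)
  Ideal.Quotient.liftₐ _ f fun _ ha => by
    refine RingHom.mem_ker.1 (Ideal.span_le (I := RingHom.ker f).2 ?_ ha)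
    rintro _ ⟨i₁, i₂, j₁, j₂, -, -, rfl⟩
    simp only [SetLike.mem_coe, RingHom.mem_ker, map_sub, map_mul, f, aeval_X]
    ring

theorem segre_xbar (i : Fin m) (j : Fin n) :
    segre k m n (xbar k m n i j) = X (Sum.inl i) * X (Sum.inr j) :=
  aeval_X _ _

theorem map_maxIdeal_segre_le :
    (maxIdeal k m n).map (segre k m n) ≤ idealOfVars (Fin m ⊕ Fin n) k ^ 2 := by
  rw [maxIdeal, Ideal.map_span, Ideal.span_le]
  rintro _ ⟨_, ⟨p, rfl⟩, rfl⟩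
  rw [segre_xbar, pow_two]
  exact Ideal.mul_mem_mul (Ideal.subset_span ⟨_, rfl⟩) (Ideal.subset_span ⟨_, rfl⟩)

variable [NeZero n]

-- Column `0` is the paper's first column.
variable (k m n) in
def colProd (t : Multiset (Fin m)) : DetRing k m n :=
  (t.map fun i => xbar k m n i 0).prod

theorem colProd_cons (a : Fin m) (t : Multiset (Fin m)) :
    colProd k m n (a ::ₘ t) = xbar k m n a 0 * colProd k m n t := by
  simp [colProd]

theorem colIdeal_eq_span_range :
    colIdeal k m n = Ideal.span (Set.range fun i => xbar k m n i 0) := by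
  refine congrArg Ideal.span (Set.ext fun y => ⟨?_, ?_⟩)
  · rintro ⟨i, j, hj, rfl⟩
    obtain rfl : j = 0 := Fin.ext (by simpa using hj)
    exact ⟨i, rfl⟩
  · rintro ⟨i, rfl⟩
    exact ⟨i, 0, Fin.val_zero n, rfl⟩

theorem colIdeal_le_maxIdeal : colIdeal k m n ≤ maxIdeal k m n := by
  rw [colIdeal_eq_span_range]
  exact Ideal.span_mono (Set.range_subset_iff.2 fun i => ⟨(i, 0), rfl⟩)

theorem colIdeal_pow_eq_span (e : ℕ) :
    colIdeal k m n ^ e = Ideal.span (colProd k m n '' {t | Multiset.card t = e}) := by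
  induction e with
  | zero => simp [Set.image, colProd]
  | succ e ih =>
    rw [Submodule.pow_succ, ih, colIdeal_eq_span_range, Ideal.span_mul_span']
    refine congrArg Ideal.span (Set.ext fun y => ⟨?_, ?_⟩)
    · rintro ⟨_, ⟨t, ht, rfl⟩, _, ⟨i, rfl⟩, rfl⟩
      exact ⟨i ::ₘ t, by simpa using ht, by rw [colProd_cons, mul_comm]⟩
    · rintro ⟨_, ht, rfl⟩
      obtain ⟨i, t, rfl, ht'⟩ := Multiset.card_eq_succ_iff.1 ht
      exact ⟨_, ⟨t, ht', rfl⟩, _, ⟨i, rfl⟩, by rw [colProd_cons, mul_comm]⟩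

variable (k m n) in
def rowColProd (j : Fin n) : List (Fin m) → DetRing k m n
  | [] => 1
  | a :: t => xbar k m n a j * colProd k m n t

theorem rowColProd_perm (j : Fin n) {l l' : List (Fin m)} (h : l.Perm l') :
    rowColProd k m n j l = rowColProd k m n j l' := by
  induction h with
  | nil => rfl
  | cons a h _ => simp only [rowColProd, Multiset.coe_eq_coe.2 h]
  | swap a b l =>
    simp only [rowColProd, ← Multiset.cons_coe, colProd_cons, ← mul_assoc, xbar_mul_xbar_swap b a]
  | trans _ _ ih ih' => exact ih.trans ih'

-- `x_{a j} · ∏_{b ∈ s - {a}} x_{b 0}` for any `a ∈ s`, well defined by `rowColProd_perm`.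
variable (k m n) in
def mixedProd (s : Multiset (Fin m)) (j : Fin n) : DetRing k m n :=
  Quot.liftOn s (rowColProd k m n j) fun _ _ => rowColProd_perm j

theorem mixedProd_cons (a : Fin m) (t : Multiset (Fin m)) (j : Fin n) :
    mixedProd k m n (a ::ₘ t) j = xbar k m n a j * colProd k m n t :=
  Quot.inductionOn t fun _ => rfl

theorem span_range_mixedProd (e : ℕ) :
    Ideal.span (Set.range fun ω : Sym (Fin m) (e + 1) × Fin n => mixedProd k m n ω.1 ω.2) =
      maxIdeal k m n * colIdeal k m n ^ e := by
  rw [maxIdeal, colIdeal_pow_eq_span, Ideal.span_mul_span']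
  refine congrArg Ideal.span (Set.ext fun y => ⟨?_, ?_⟩)
  · rintro ⟨⟨s, j⟩, rfl⟩
    obtain ⟨a, t, rfl⟩ := Sym.exists_eq_cons_of_succ s
    exact ⟨_, ⟨(a, j), rfl⟩, _, ⟨t, t.2, rfl⟩, (mixedProd_cons a t j).symm⟩
  · rintro ⟨_, ⟨⟨a, j⟩, rfl⟩, _, ⟨t, ht, rfl⟩, rfl⟩
    exact ⟨(⟨a ::ₘ t, by simpa using ht⟩, j), mixedProd_cons a t j⟩

theorem segre_colProd (t : Multiset (Fin m)) :
    segre k m n (colProd k m n t) =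
      monomial (Multiset.toFinsupp (t.map Sum.inl) +
        Finsupp.single (Sum.inr 0) (Multiset.card t)) 1 := by
  induction t using Multiset.induction_on with
  | empty => simp [colProd]
  | cons a t ih =>
    rw [colProd_cons, map_mul, ih, segre_xbar, X, X, monomial_mul, monomial_mul, one_mul, one_mul,
      Multiset.map_cons, ← Multiset.singleton_add, Multiset.toFinsupp_add,
      Multiset.toFinsupp_singleton, Multiset.card_cons, Finsupp.single_add]
    abel_nf

variable (n) in
def mixedExponent (e : ℕ) (ω : Sym (Fin m) (e + 1) × Fin n) : Fin m ⊕ Fin n →₀ ℕ :=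
  Multiset.toFinsupp ((ω.1 : Multiset (Fin m)).map Sum.inl) + Finsupp.single (Sum.inr ω.2) 1 +
    Finsupp.single (Sum.inr 0) e

theorem segre_mixedProd (e : ℕ) (ω : Sym (Fin m) (e + 1) × Fin n) :
    segre k m n (mixedProd k m n ω.1 ω.2) = monomial (mixedExponent n e ω) 1 := by
  obtain ⟨s, j⟩ := ω
  obtain ⟨a, t, rfl⟩ := Sym.exists_eq_cons_of_succ s
  rw [mixedExponent, Sym.coe_cons, mixedProd_cons, map_mul, segre_xbar, segre_colProd, X, X,
    monomial_mul, monomial_mul, one_mul, one_mul, Multiset.map_cons, ← Multiset.singleton_add,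
    Multiset.toFinsupp_add, Multiset.toFinsupp_singleton, Sym.card_coe]
  abel_nf

theorem degree_mixedExponent (e : ℕ) (ω : Sym (Fin m) (e + 1) × Fin n) :
    (mixedExponent n e ω).degree = 2 * e + 2 := by
  have hcard : (Multiset.toFinsupp ((ω.1 : Multiset (Fin m)).map
      (Sum.inl : _ → Fin m ⊕ Fin n))).degree = e + 1 :=
    (Multiset.toFinsupp_sum_eq _).trans (by rw [Multiset.card_map, Sym.card_coe])
  simp only [mixedExponent, map_add, hcard, Finsupp.degree_single]
  ring

theorem mixedExponent_injective (e : ℕ) :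
    (mixedExponent n e : _ → Fin m ⊕ Fin n →₀ ℕ).Injective := by
  rintro ⟨s, j⟩ ⟨s', j'⟩ h
  have hs : s = s' := by
    refine Sym.coe_injective (Multiset.ext.2 fun i => ?_)
    simpa [mixedExponent, Finsupp.single_apply, Multiset.count_map_eq_count' _ _ Sum.inl_injective]
      using DFunLike.congr_fun h (Sum.inl i)
  have hj : j' = j := by
    simpa [mixedExponent, Finsupp.single_apply] using DFunLike.congr_fun h (Sum.inr j)
  rw [hs, hj]

theorem map_segre_le (e : ℕ) :
    (maxIdeal k m n * (maxIdeal k m n * colIdeal k m n ^ e)).map (segre k m n) ≤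
      idealOfVars (Fin m ⊕ Fin n) k ^ (2 * (e + 2)) := by
  have hle : maxIdeal k m n * (maxIdeal k m n * colIdeal k m n ^ e) ≤ maxIdeal k m n ^ (e + 2) :=
    calc _ ≤ maxIdeal k m n * (maxIdeal k m n * maxIdeal k m n ^ e) :=
          Ideal.mul_mono_right (Ideal.mul_mono_right (Ideal.pow_right_mono colIdeal_le_maxIdeal e))
      _ = maxIdeal k m n ^ (e + 2) := by ring
  calc _ ≤ (maxIdeal k m n ^ (e + 2)).map (segre k m n) := Ideal.map_mono hle
    _ = (maxIdeal k m n).map (segre k m n) ^ (e + 2) := Ideal.map_pow _ _ _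
    _ ≤ (idealOfVars _ k ^ 2) ^ (e + 2) := Ideal.pow_right_mono map_maxIdeal_segre_le _
    _ = idealOfVars _ k ^ (2 * (e + 2)) := (pow_mul _ _ _).symm

theorem linearIndependent_mixedProd (e : ℕ) :
    LinearIndependent k
      (Ideal.Quotient.mk (maxIdeal k m n * (maxIdeal k m n * colIdeal k m n ^ e)) ∘
        fun ω : Sym (Fin m) (e + 1) × Fin n => mixedProd k m n ω.1 ω.2) :=
  linearIndependent_mk_of_eq_monomial (segre k m n) (map_segre_le e) (mixedExponent_injective e)
    (fun ω => by rw [degree_mixedExponent]; omega) (segre_mixedProd e)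

end DeterminantalRing

theorem stmt_3 (hm : 2 ≤ m) (hmn : m ≤ n) :
    idealMu (maxIdeal k m n * colIdeal k m n ^ (n - m)) =
      Nat.choose n (n - m + 1) * n := by
  have : NeZero n := ⟨by omega⟩
  rw [idealMu_eq_card exists_sub_algebraMap_mem_maxIdeal (span_range_mixedProd (n - m))
    (linearIndependent_mixedProd (n - m)), Fintype.card_prod, Sym.card_sym_eq_multichoose,
    Fintype.card_fin, Fintype.card_fin, Nat.multichoose_eq]
  congr 2
  omega
end
end

section
/- Let ℓ ≥ 0 be an integer and 𝔮 = (x_{1n}, …, x_{mn}) the ideal of R generated by the entries of the last column of X. Then μ_R(𝔮·Q^ℓ) = μ_R(Q^{ℓ+1}) = C(m+ℓ, ℓ+1). In particular, the power Q^{ℓ+1} is minimally generated by the C(m+ℓ, ℓ+1) monomials of degree ℓ+1 in x_{11}, …, x_{m1}. -/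
/-!
The ring map `R → k[t₁, …, t_m]`, `x_{ij} ↦ t_i`, sends both `Q` and `𝔮` onto `𝔪 = (t₁, …, t_m)`,
hence `𝔮·Q^ℓ` and `Q^{ℓ+1}` onto `𝔪^{ℓ+1}`, and a generating set maps to a generating set.
In the polynomial ring the degree-`(ℓ+1)` components of any generating set of `𝔪^{ℓ+1}` span all
forms of degree `ℓ+1` over `k`, so `μ(𝔪^{ℓ+1}) ≥ C(m+ℓ, ℓ+1)`, the number of monomials of that
degree. Conversely `Q^{ℓ+1}` is generated by these monomials in the `x_{i1}`, and because of the
minors `x_{an} x_{b1} = x_{bn} x_{a1}` the generator `x_{an} · x^e` of `𝔮·Q^ℓ` only depends on the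
monomial `t_a t^e`, so `𝔮·Q^ℓ` needs no more generators either.
-/

set_option synthInstance.maxHeartbeats 1000000

noncomputable section

open MvPolynomial

variable (k : Type*) [Field k] (m n : ℕ)

/-- The ideal `𝔮 = (x_{1n}, …, x_{mn})` generated by the entries of the last
column of `X`. -/
def lastColIdeal : Ideal (DetRing k m n) :=
  Ideal.span {y | ∃ (i : Fin m) (j : Fin n), (j : ℕ) = n - 1 ∧ y = xbar k m n i j}

open MvPolynomial Finset

section MinimalGenerators

variable {A B : Type*} [CommRing A] [CommRing B]

theorem idealMu_le_card {I : Ideal A} {s : Finset A} (hs : Ideal.span (s : Set A) = I) :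
    idealMu I ≤ s.card :=
  Nat.sInf_le ⟨s, rfl, hs⟩

theorem exists_finset_card_eq_idealMu {I : Ideal A} (hI : I.FG) :
    ∃ s : Finset A, s.card = idealMu I ∧ Ideal.span (s : Set A) = I := by
  obtain ⟨s, hs⟩ := hI
  have hne : {c | ∃ s : Finset A, s.card = c ∧ Ideal.span (s : Set A) = I}.Nonempty :=
    ⟨s.card, s, rfl, hs⟩
  exact Nat.sInf_mem hne

-- For an ideal that is not finitely generated, `idealMu` is the junk value `sInf ∅ = 0`.
theorem idealMu_map_le (f : A →+* B) {I : Ideal A} (hI : I.FG) :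
    idealMu (I.map f) ≤ idealMu I := by
  classical
  obtain ⟨s, hcard, hs⟩ := exists_finset_card_eq_idealMu hI
  calc idealMu (I.map f) ≤ (s.image f).card :=
        idealMu_le_card (by rw [coe_image, ← Ideal.map_span, hs])
    _ ≤ idealMu I := hcard ▸ card_image_le

end MinimalGenerators

section PowersOfSpan

variable {A ι : Type*} [CommRing A] [Fintype ι]

theorem coe_finsuppAntidiag_univ [DecidableEq ι] (d : ℕ) :
    ((finsuppAntidiag univ d : Finset (ι →₀ ℕ)) : Set (ι →₀ ℕ)) = {x | x.degree = d} := by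
  ext x
  simp [Finsupp.degree_eq_sum]

theorem span_range_pow_eq_span_image_finsuppAntidiag [DecidableEq ι] (v : ι → A) (d : ℕ) :
    Ideal.span (Set.range v) ^ d =
      Ideal.span ((fun x : ι →₀ ℕ => x.prod (v · ^ ·)) ''
        ((finsuppAntidiag univ d : Finset (ι →₀ ℕ)) : Set (ι →₀ ℕ))) := by
  simp only [Ideal.span]
  rw [Submodule.span_pow, ← Set.image_univ, Finsupp.image_pow_eq_finsuppProd_image,
    coe_finsuppAntidiag_univ]
  simp

theorem span_range_pow_eq_span_prod_pow (v : ι → A) (d : ℕ) :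
    Ideal.span (Set.range v) ^ d =
      Ideal.span {y | ∃ e : ι → ℕ, ∑ i, e i = d ∧ y = ∏ i, v i ^ e i} := by
  classical
  rw [span_range_pow_eq_span_image_finsuppAntidiag, coe_finsuppAntidiag_univ]
  congr 1
  ext y
  simp only [Set.mem_image, Set.mem_ofPred_eq, Finsupp.degree_eq_sum]
  constructor
  · rintro ⟨x, hx, rfl⟩
    exact ⟨x, hx, Finsupp.prod_fintype _ _ fun _ => pow_zero _⟩
  · rintro ⟨e, he, rfl⟩
    refine ⟨Finsupp.equivFunOnFinite.symm e, by simpa using he, ?_⟩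
    rw [Finsupp.prod_fintype _ _ fun _ => pow_zero _]
    simp

theorem idealMu_span_range_pow_le (v : ι → A) (d : ℕ) :
    idealMu (Ideal.span (Set.range v) ^ d) ≤ (Fintype.card ι + d - 1).choose d := by
  classical
  rw [span_range_pow_eq_span_image_finsuppAntidiag, ← coe_image]
  refine (idealMu_le_card rfl).trans (card_image_le.trans_eq ?_)
  rw [card_finsuppAntidiag_nat_eq_choose, card_univ]

end PowersOfSpan

section RankOne

variable {A ι : Type*} [CommRing A]

theorem mul_prod_pow_eq_of_add_single_eq {u v : ι → A} (h : ∀ a b, u a * v b = u b * v a)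
    {x y : ι →₀ ℕ} {a b : ι} (hxy : x + Finsupp.single a 1 = y + Finsupp.single b 1) :
    u a * x.prod (v · ^ ·) = u b * y.prod (v · ^ ·) := by
  classical
  by_cases hab : a = b
  · subst hab
    rw [(add_left_inj _).mp hxy]
  have hb : Finsupp.single b 1 ≤ x := by
    have hxb : x b = y b + 1 := by simpa [hab] using DFunLike.congr_fun hxy b
    rw [Finsupp.single_le_iff]
    omega
  set z := x - Finsupp.single b 1
  have hx : x = z + Finsupp.single b 1 := (tsub_add_cancel_of_le hb).symm
  have hy : y = z + Finsupp.single a 1 := by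
    apply add_right_cancel (b := Finsupp.single b 1)
    rw [← hxy, hx, add_right_comm]
  have prod_add_single : ∀ c, (z + Finsupp.single c 1).prod (v · ^ ·) = z.prod (v · ^ ·) * v c :=
    fun c => by
      rw [Finsupp.prod_add_index' (fun _ => pow_zero _) (fun _ _ _ => pow_add _ _ _)]
      simp [Finsupp.prod_single_index]
  rw [hx, hy, prod_add_single, prod_add_single, mul_left_comm, h a b, mul_left_comm]

theorem idealMu_span_range_mul_pow_le [Fintype ι] {u v : ι → A} (h : ∀ a b, u a * v b = u b * v a)
    (ℓ : ℕ) :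
    idealMu (Ideal.span (Set.range u) * Ideal.span (Set.range v) ^ ℓ) ≤
      (Fintype.card ι + ℓ).choose (ℓ + 1) := by
  classical
  cases isEmpty_or_nonempty ι
  · exact (idealMu_le_card (s := ∅) (by simp [Set.range_eq_empty])).trans (Nat.zero_le _)
  have hsupp : ∀ f : ι →₀ ℕ, f.degree = ℓ + 1 → ∃ a, Finsupp.single a 1 ≤ f := by
    intro f hf
    obtain ⟨a, ha⟩ : f.support.Nonempty := by
      rw [Finsupp.support_nonempty_iff]
      rintro rfl
      simp at hf
    exact ⟨a, Finsupp.single_le_iff.mpr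
      (Nat.one_le_iff_ne_zero.mpr (Finsupp.mem_support_iff.mp ha))⟩
  -- Which index `a f` is chosen does not matter, by `mul_prod_pow_eq_of_add_single_eq`.
  choose! a ha using hsupp
  let G : (ι →₀ ℕ) → A := fun f => u (a f) * (f - Finsupp.single (a f) 1).prod (v · ^ ·)
  have hspan : Ideal.span (Set.range u) * Ideal.span (Set.range v) ^ ℓ =
      Ideal.span (G '' ((finsuppAntidiag univ (ℓ + 1) : Finset (ι →₀ ℕ)) : Set (ι →₀ ℕ))) := by
    rw [span_range_pow_eq_span_image_finsuppAntidiag, Ideal.span_mul_span',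
      coe_finsuppAntidiag_univ, coe_finsuppAntidiag_univ]
    congr 1
    ext y
    constructor
    · rintro ⟨_, ⟨b, rfl⟩, _, ⟨x, hx, rfl⟩, rfl⟩
      have hf : (x + Finsupp.single b 1).degree = ℓ + 1 := by
        rw [map_add, hx, Finsupp.degree_single]
      exact ⟨_, hf, mul_prod_pow_eq_of_add_single_eq h (tsub_add_cancel_of_le (ha _ hf))⟩
    · rintro ⟨f, hf, rfl⟩
      refine ⟨_, ⟨a f, rfl⟩, _, ⟨f - Finsupp.single (a f) 1, ?_, rfl⟩, rfl⟩
      have := congrArg Finsupp.degree (tsub_add_cancel_of_le (ha f hf))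
      rw [map_add, Finsupp.degree_single, hf] at this
      exact Nat.add_right_cancel this
  calc _ ≤ _ := idealMu_le_card (by rw [coe_image, hspan])
    _ ≤ _ := card_image_le
    _ = _ := by rw [card_finsuppAntidiag_nat_eq_choose, card_univ, Nat.add_succ_sub_one]

end RankOne

section PolynomialLowerBound

variable {σ R : Type*} [CommRing R]

theorem homogeneousComponent_eq_zero_of_mem_pow_idealOfVars {j n : ℕ} (hj : j < n)
    {f : MvPolynomial σ R} (hf : f ∈ idealOfVars σ R ^ n) : homogeneousComponent j f = 0 := by
  ext u
  rw [coeff_homogeneousComponent, coeff_zero]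
  split_ifs with hu
  · exact (mem_pow_idealOfVars_iff' n f).mp hf u (hu ▸ hj)
  · rfl

theorem homogeneousComponent_mul_of_mem_pow_idealOfVars {d : ℕ} {g : MvPolynomial σ R}
    (hg : g ∈ idealOfVars σ R ^ d) (c : MvPolynomial σ R) :
    homogeneousComponent d (c * g) = constantCoeff c • homogeneousComponent d g := by
  have hc : c - C (constantCoeff c) ∈ idealOfVars σ R := by
    rw [← pow_one (idealOfVars σ R), mem_pow_idealOfVars_iff']
    intro x hx
    rw [Nat.lt_one_iff, Finsupp.degree_eq_zero_iff] at hx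
    simp [hx, constantCoeff_eq]
  have hrest : (c - C (constantCoeff c)) * g ∈ idealOfVars σ R ^ (d + 1) :=
    pow_succ' (idealOfVars σ R) d ▸ Ideal.mul_mem_mul hc hg
  calc homogeneousComponent d (c * g)
      = homogeneousComponent d (C (constantCoeff c) * g + (c - C (constantCoeff c)) * g) := by
        ring_nf
    _ = constantCoeff c • homogeneousComponent d g := by
      rw [map_add, homogeneousComponent_eq_zero_of_mem_pow_idealOfVars d.lt_succ_self hrest,
        add_zero, homogeneousComponent_C_mul, C_mul']

theorem homogeneousComponent_mem_span_image_of_span_eq {d : ℕ} {s : Set (MvPolynomial σ R)}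
    (hs : Ideal.span s = idealOfVars σ R ^ d) {f : MvPolynomial σ R}
    (hf : f ∈ idealOfVars σ R ^ d) :
    homogeneousComponent d f ∈ Submodule.span R (homogeneousComponent d '' s) := by
  rw [← hs] at hf
  induction hf using Submodule.span_induction with
  | mem g hg => exact Submodule.subset_span (Set.mem_image_of_mem _ hg)
  | zero => simp
  | add f g _ _ hf hg => rw [map_add]; exact add_mem hf hg
  | smul c g hg ih =>
    rw [smul_eq_mul, homogeneousComponent_mul_of_mem_pow_idealOfVars (hs ▸ hg) c]
    exact Submodule.smul_mem _ _ ih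

theorem choose_le_idealMu_pow_idealOfVars {K : Type*} [Field K] [Fintype σ] (d : ℕ) :
    (Fintype.card σ + d - 1).choose d ≤ idealMu (idealOfVars σ K ^ d) := by
  classical
  obtain ⟨s, hcard, hs⟩ := exists_finset_card_eq_idealMu (Ideal.FG.pow (idealOfVars_fg σ K))
  let monomials : finsuppAntidiag univ d → MvPolynomial σ K := fun u => monomial u.1 1
  have hli : LinearIndependent K monomials := by
    have := (basisMonomials σ K).linearIndependent
    rw [coe_basisMonomials] at this
    exact this.comp _ Subtype.val_injective
  have hle : Set.range monomials ≤ Submodule.span K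
      ((s.image (homogeneousComponent d) : Finset _) : Set (MvPolynomial σ K)) := by
    rintro _ ⟨⟨u, hu⟩, rfl⟩
    have hu : u.degree = d := by simpa [Finsupp.degree_eq_sum] using hu
    have hmem := (monomial_mem_pow_idealOfVars_iff d u (one_ne_zero (α := K))).mpr hu.ge
    rw [coe_image]
    simpa [monomials, homogeneousComponent_eq_self (isHomogeneous_monomial (1 : K) hu)] using
      homogeneousComponent_mem_span_image_of_span_eq hs hmem
  have := linearIndependent_le_span' monomials hli _ hle
  simp only [Cardinal.mk_coe_finset, Finset.coe_sort_coe, Fintype.card_coe, Nat.cast_le] at this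
  rw [← card_univ, ← card_finsuppAntidiag_nat_eq_choose, ← hcard]
  exact this.trans card_image_le

theorem choose_le_idealMu_of_map_eq_pow_idealOfVars {A K : Type*} [CommRing A]
    [IsNoetherianRing A] [Field K] [Fintype σ] (f : A →+* MvPolynomial σ K) {J : Ideal A} {d : ℕ}
    (hJ : J.map f = idealOfVars σ K ^ d) :
    (Fintype.card σ + d - 1).choose d ≤ idealMu J :=
  (choose_le_idealMu_pow_idealOfVars d).trans (hJ ▸ idealMu_map_le f (IsNoetherian.noetherian J))

end PolynomialLowerBound

section DetRing

theorem detIdeal_le_ker_aeval_X_fst :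
    detIdeal k m n ≤
      RingHom.ker (aeval fun p : Fin m × Fin n => (X p.1 : MvPolynomial (Fin m) k)) := by
  rw [detIdeal, Ideal.span_le]
  rintro _ ⟨i₁, i₂, j₁, j₂, -, -, rfl⟩
  simp

def collapseColumns : DetRing k m n →ₐ[k] MvPolynomial (Fin m) k :=
  Ideal.Quotient.liftₐ _ (aeval fun p => X p.1) fun _ ha =>
    RingHom.mem_ker.mp (detIdeal_le_ker_aeval_X_fst k m n ha)

@[simp]
theorem collapseColumns_xbar (i : Fin m) (j : Fin n) :
    collapseColumns k m n (xbar k m n i j) = X i := by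
  change aeval (fun p : Fin m × Fin n => (X p.1 : MvPolynomial (Fin m) k)) (X (i, j)) = X i
  exact aeval_X _ _

theorem span_column_eq (j : Fin n) :
    Ideal.span {y | ∃ (i : Fin m) (j' : Fin n), (j' : ℕ) = j ∧ y = xbar k m n i j'} =
      Ideal.span (Set.range fun i => xbar k m n i j) := by
  congr 1
  ext y
  simp [Fin.val_inj, eq_comm]

theorem map_collapseColumns_span_column (j : Fin n) :
    (Ideal.span (Set.range fun i => xbar k m n i j)).map (collapseColumns k m n) =
      idealOfVars (Fin m) k := by
  rw [Ideal.map_span, ← Set.range_comp]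
  simp [Function.comp_def]

theorem xbar_mul_xbar_comm (a b : Fin m) (j j' : Fin n) :
    xbar k m n a j * xbar k m n b j' = xbar k m n a j' * xbar k m n b j := by
  have minor : ∀ a b : Fin m, ∀ j j' : Fin n, a < b → j < j' →
      xbar k m n a j * xbar k m n b j' = xbar k m n a j' * xbar k m n b j := by
    intro a b j j' hab hj
    have hmem : X (a, j) * X (b, j') - X (a, j') * X (b, j) ∈ detIdeal k m n :=
      Ideal.subset_span ⟨a, b, j, j', hab, hj, rfl⟩
    simpa [xbar, sub_eq_zero] using Ideal.Quotient.eq_zero_iff_mem.mpr hmem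
  rcases eq_or_ne j j' with rfl | hjj
  · rfl
  rcases lt_trichotomy a b with hab | rfl | hab <;> rcases hjj.lt_or_gt with hj | hj
  · exact minor a b j j' hab hj
  · exact (minor a b j' j hab hj).symm
  · exact mul_comm _ _
  · exact mul_comm _ _
  · linear_combination -minor b a j j' hab hj
  · linear_combination minor b a j' j hab hj

end DetRing

/-- **Step in Lemma 3.3.** For every `ℓ ≥ 0`,
`μ_R(𝔮·Q^ℓ) = μ_R(Q^{ℓ+1}) = C(m+ℓ, ℓ+1)`; in particular `Q^{ℓ+1}` is minimally
generated by the `C(m+ℓ, ℓ+1)` monomials of degree `ℓ+1` in `x_{11}, …, x_{m1}`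
(which indeed span `Q^{ℓ+1}`). -/
theorem stmt_5 (hm : 2 ≤ m) (hmn : m ≤ n) (ℓ : ℕ) :
    idealMu (lastColIdeal k m n * colIdeal k m n ^ ℓ) = Nat.choose (m + ℓ) (ℓ + 1) ∧
    idealMu (colIdeal k m n ^ (ℓ + 1)) = Nat.choose (m + ℓ) (ℓ + 1) ∧
    Ideal.span {y : DetRing k m n | ∃ e : Fin m → ℕ, (∑ i, e i) = ℓ + 1 ∧
        y = ∏ i, (xbar k m n i ⟨0, by omega⟩) ^ e i} =
      colIdeal k m n ^ (ℓ + 1) := by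
  have hn : 0 < n := by omega
  have hQ : colIdeal k m n = Ideal.span (Set.range fun i => xbar k m n i ⟨0, hn⟩) :=
    span_column_eq k m n ⟨0, hn⟩
  have hq : lastColIdeal k m n =
      Ideal.span (Set.range fun i => xbar k m n i ⟨n - 1, by omega⟩) :=
    span_column_eq k m n ⟨n - 1, by omega⟩
  have hchoose :
      (Fintype.card (Fin m) + (ℓ + 1) - 1).choose (ℓ + 1) = (m + ℓ).choose (ℓ + 1) := by
    rw [Fintype.card_fin, Nat.add_succ_sub_one]
  have lower : ∀ J : Ideal (DetRing k m n),
      J.map (collapseColumns k m n) = idealOfVars (Fin m) k ^ (ℓ + 1) →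
        (m + ℓ).choose (ℓ + 1) ≤ idealMu J := fun J hJ =>
    hchoose ▸ choose_le_idealMu_of_map_eq_pow_idealOfVars (collapseColumns k m n).toRingHom hJ
  refine ⟨le_antisymm ?_ (lower _ ?_), le_antisymm ?_ (lower _ ?_), ?_⟩
  · rw [hq, hQ]
    simpa using idealMu_span_range_mul_pow_le
      (fun a b => (xbar_mul_xbar_comm k m n a b _ _).trans (mul_comm _ _)) ℓ
  · rw [Ideal.map_mul, Ideal.map_pow, hq, hQ, map_collapseColumns_span_column,
      map_collapseColumns_span_column, pow_succ']
  · rw [hQ, ← hchoose]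
    exact idealMu_span_range_pow_le _ _
  · rw [Ideal.map_pow, hQ, map_collapseColumns_span_column]
  · rw [hQ, span_range_pow_eq_span_prod_pow]
end
end
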